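/- arXiv:1112.0665 — 7 statements merged into one kernel-verified Lean document; each statement's English description precedes it below -/
import Mathlib

section
/- The fixed point set of the generalized thresholding operator T_GT^(K) equals the union over all K-element index sets J ⊆ {1,...,L} of the subspaces M_J = {a ∈ R^L : a_l = 0 for all l ∉ J}. In particular, Fix(T_GT^(K)) = {a ∈ R^L : ||a||_0 ≤ K} is a (non-convex) union of linear subspaces. -/
/-- The fixed point set of `T_GT^(K)` equals the union over all
`K`-element index sets `J` of the subspaces `M_J`, i.e. the set of vectors with at
most `K` nonzero components. -/
theorem gt_fixed_point_set
    (L K : ℕ) (hL : 2 ≤ L) (hK1 : 1 ≤ K) (hKL : K ≤ L - 1)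
    (Jsel : (Fin L → ℝ) → Finset (Fin L))
    (hJcard : ∀ x, (Jsel x).card = K)
    (hJsel : ∀ x : Fin L → ℝ, ∀ l ∈ Jsel x, ∀ l' ∉ Jsel x,
      |x l'| < |x l| ∨ (|x l'| = |x l| ∧ (l : ℕ) < (l' : ℕ)))
    (shr : ℝ → ℝ)
    (hshr1 : ∀ (x : Fin L → ℝ) (τ : ℝ), (∀ l ∈ Jsel x, |τ| ≤ |x l|) → τ * shr τ ≥ 0)
    (hshr2 : ∀ (x : Fin L → ℝ) (τ : ℝ), (∀ l ∈ Jsel x, |τ| ≤ |x l|) → |shr τ| ≤ |τ|)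
    (hshr3 : ∀ ε : ℝ, 0 < ε → ∃ δ : ℝ, 0 < δ ∧ ∀ (x : Fin L → ℝ) (τ : ℝ),
      (∀ l ∈ Jsel x, |τ| ≤ |x l|) → ε ≤ |τ| → |shr τ| ≤ |τ| - δ)
    (x : Fin L → ℝ) :
    (((fun l => if l ∈ Jsel x then x l else shr (x l)) = x) ↔
      (∃ J : Finset (Fin L), J.card = K ∧ ∀ l ∉ J, x l = 0)) ∧
    ((∃ J : Finset (Fin L), J.card = K ∧ ∀ l ∉ J, x l = 0) ↔
      (Finset.univ.filter fun l => x l ≠ 0).card ≤ K) := by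
  have hshr0 : shr 0 = 0 := by
    have h2 := hshr2 x 0 (by intro l _; simp [abs_nonneg])
    simpa [abs_nonneg, abs_eq_zero] using h2
  constructor
  · constructor
    · intro hfix
      refine ⟨Jsel x, hJcard x, ?_⟩
      intro l hl
      by_contra hx
      have hε : 0 < |x l| := abs_pos.mpr hx
      obtain ⟨δ, hδ, hδ2⟩ := hshr3 _ hε
      have hle : ∀ l' ∈ Jsel x, |x l| ≤ |x l'| := by
        intro l' hl'
        rcases hJsel x l' hl' l hl with h | h
        · exact h.le
        · exact h.1.le
      have hbound := hδ2 x (x l) hle le_rfl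
      have heq : shr (x l) = x l := by
        have := congrFun hfix l
        simpa [hl] using this
      rw [heq] at hbound
      linarith
    · rintro ⟨J, hJcard', hJ0⟩
      funext l
      by_cases hl : l ∈ Jsel x
      · simp [hl]
      · simp only [hl, if_false]
        have hx0 : x l = 0 := by
          by_contra hx
          have hε : 0 < |x l| := abs_pos.mpr hx
          have hsub : Jsel x ⊆ J := by
            intro l' hl'
            by_contra hl'J
            have h0 : x l' = 0 := hJ0 l' hl'J
            rcases hJsel x l' hl' l hl with h | h
            · rw [h0] at h; simp at h; linarith
            · rw [h0] at h; simp at h; exact hx h.1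
          have hlJ : l ∈ J := by
            by_contra hlJ
            exact hx (hJ0 l hlJ)
          have hc1 : (insert l (Jsel x)).card ≤ J.card :=
            Finset.card_le_card (Finset.insert_subset hlJ hsub)
          rw [Finset.card_insert_of_notMem hl, hJcard x, hJcard'] at hc1
          omega
        rw [hx0, hshr0]
  · constructor
    · rintro ⟨J, hJcard', hJ0⟩
      have hsub : (Finset.univ.filter fun l => x l ≠ 0) ⊆ J := by
        intro l hl
        simp only [Finset.mem_filter] at hl
        by_contra hlJ
        exact hl.2 (hJ0 l hlJ)
      calc (Finset.univ.filter fun l => x l ≠ 0).card ≤ J.card := Finset.card_le_card hsub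
        _ = K := hJcard'
    · intro h
      obtain ⟨J, hJsub, hJc⟩ := Finset.exists_superset_card_eq h
        (by simpa using (by omega : K ≤ L))
      refine ⟨J, hJc, ?_⟩
      intro l hl
      by_contra hx
      exact hl (hJsub (by simp [hx]))
end

section
/- The generalized thresholding operator T_GT^(K) is 1-attracting partially quasi-nonexpansive: for every x ∈ R^L and every y ∈ M_{J_x^(K)} (the subspace of vectors supported on the K largest-magnitude coordinates of x), one has ||x − T_GT^(K)(x)||² ≤ ||x − y||² − ||T_GT^(K)(x) − y||². -/
/-!
Expanding `‖x - y‖² = ‖(x - z) + (z - y)‖²` reduces the claim to `0 ≤ ⟪x - z, z - y⟫`, which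
holds coordinatewise: on `J` the factor `x l - z l` vanishes, and off `J` we have `y l = 0`, so the
term is `(τ - shr τ) * shr τ` with `τ = x l`, nonnegative because `shr τ` has the sign of `τ` and
smaller modulus.
-/

open scoped RealInnerProductSpace

theorem norm_sub_sq_le_sub_of_inner_nonneg {E : Type*} [NormedAddCommGroup E]
    [InnerProductSpace ℝ E] {x y z : E} (h : 0 ≤ ⟪x - z, z - y⟫) :
    ‖x - z‖ ^ 2 ≤ ‖x - y‖ ^ 2 - ‖z - y‖ ^ 2 := by
  have hsplit : ‖x - y‖ ^ 2 = ‖x - z‖ ^ 2 + 2 * ⟪x - z, z - y⟫ + ‖z - y‖ ^ 2 := by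
    rw [← norm_add_sq_real, sub_add_sub_cancel]
  linarith

theorem EuclideanSpace.inner_nonneg_of_forall_mul_nonneg {ι : Type*} [Fintype ι]
    {u v : EuclideanSpace ℝ ι} (h : ∀ i, 0 ≤ u i * v i) : 0 ≤ ⟪u, v⟫ := by
  rw [PiLp.inner_apply]
  exact Finset.sum_nonneg fun i _ => by simpa [mul_comm] using h i

theorem sub_mul_nonneg_of_mul_nonneg_of_abs_le {τ s : ℝ} (hsign : 0 ≤ τ * s)
    (habs : |s| ≤ |τ|) : 0 ≤ (τ - s) * s := by
  have hsq : s * s ≤ τ * s :=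
    calc s * s = |s| * |s| := (abs_mul_abs_self s).symm
      _ ≤ |τ| * |s| := mul_le_mul_of_nonneg_right habs (abs_nonneg s)
      _ = τ * s := by rw [← abs_mul, abs_of_nonneg hsign]
  nlinarith

theorem gt_one_attracting_general
    (L : ℕ)
    (Jsel : (Fin L → ℝ) → Finset (Fin L))
    (hJsel : ∀ x : Fin L → ℝ, ∀ l ∈ Jsel x, ∀ l' ∉ Jsel x,
      |x l'| < |x l| ∨ (|x l'| = |x l| ∧ (l : ℕ) < (l' : ℕ)))
    (shr : ℝ → ℝ)
    (hshr1 : ∀ (x : Fin L → ℝ) (τ : ℝ), (∀ l ∈ Jsel x, |τ| ≤ |x l|) → τ * shr τ ≥ 0)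
    (hshr2 : ∀ (x : Fin L → ℝ) (τ : ℝ), (∀ l ∈ Jsel x, |τ| ≤ |x l|) → |shr τ| ≤ |τ|)
    (x y z : EuclideanSpace ℝ (Fin L))
    (hz : ∀ l, z l = if l ∈ Jsel x then x l else shr (x l))
    (hy : ∀ l, l ∉ Jsel x → y l = 0) :
    ‖x - z‖ ^ 2 ≤ ‖x - y‖ ^ 2 - ‖z - y‖ ^ 2 := by
  refine norm_sub_sq_le_sub_of_inner_nonneg
    (EuclideanSpace.inner_nonneg_of_forall_mul_nonneg fun l => ?_)
  by_cases hl : l ∈ Jsel x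
  · simp [hz l, hl]
  · have hbelow : ∀ l' ∈ Jsel x, |x l| ≤ |x l'| := fun l' hl' =>
      (hJsel x l' hl' l hl).elim le_of_lt fun h => h.1.le
    simpa [hz l, hl, hy l hl] using
      sub_mul_nonneg_of_mul_nonneg_of_abs_le (hshr1 x _ hbelow) (hshr2 x _ hbelow)

/-- `T_GT^(K)` is 1-attracting partially quasi-nonexpansive: for every
`x` and every `y ∈ M_{J_x^(K)}`, `‖x − T x‖² ≤ ‖x − y‖² − ‖T x − y‖²`. -/
theorem gt_one_attracting
    (L K : ℕ) (hL : 2 ≤ L) (hK1 : 1 ≤ K) (hKL : K ≤ L - 1)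
    (Jsel : (Fin L → ℝ) → Finset (Fin L))
    (hJcard : ∀ x, (Jsel x).card = K)
    (hJsel : ∀ x : Fin L → ℝ, ∀ l ∈ Jsel x, ∀ l' ∉ Jsel x,
      |x l'| < |x l| ∨ (|x l'| = |x l| ∧ (l : ℕ) < (l' : ℕ)))
    (shr : ℝ → ℝ)
    (hshr1 : ∀ (x : Fin L → ℝ) (τ : ℝ), (∀ l ∈ Jsel x, |τ| ≤ |x l|) → τ * shr τ ≥ 0)
    (hshr2 : ∀ (x : Fin L → ℝ) (τ : ℝ), (∀ l ∈ Jsel x, |τ| ≤ |x l|) → |shr τ| ≤ |τ|)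
    (x y z : EuclideanSpace ℝ (Fin L))
    (hz : ∀ l, z l = if l ∈ Jsel x then x l else shr (x l))
    (hy : ∀ l, l ∉ Jsel x → y l = 0) :
    ‖x - z‖ ^ 2 ≤ ‖x - y‖ ^ 2 - ‖z - y‖ ^ 2 :=
  gt_one_attracting_general L Jsel hJsel shr hshr1 hshr2 x y z hz hy
end

section
/- The map I − T_GT^(K) is demiclosed at 0: if a sequence (x_n) in R^L converges to x_* and x_n − T_GT^(K)(x_n) → 0, then x_* is a fixed point of T_GT^(K), i.e., x_* has at most K nonzero components. -/
open Filter Topology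

/-!
If `x_*` had more than `K` nonzero components, they would all stay above some `ε > 0` in
absolute value along the tail of `x_n`. Since `T_GT^(K)` keeps only `K` components, it must
shrink one of these, and strict shrinkage makes the residual `‖x_n - T_GT^(K)(x_n)‖` at least a
fixed `δ > 0`, contradicting `x_n - T_GT^(K)(x_n) → 0`. A vector with at most `K` nonzero
components is fixed because `shr 0 = 0` and the kept components include all nonzero ones.
-/

open Finset

theorem exists_pos_eventually_le_abs_apply {ι α : Type*} {f : Filter α}
    {x : α → EuclideanSpace ℝ ι} {xstar : EuclideanSpace ℝ ι} (hx : Tendsto x f (𝓝 xstar))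
    {S : Finset ι} (hS : ∀ l ∈ S, xstar l ≠ 0) :
    ∃ ε > 0, ∀ᶠ n in f, ∀ l ∈ S, ε ≤ |x n l| := by
  obtain ⟨ε, hε, hεS⟩ : ∃ ε > 0, ∀ l ∈ S, ε < |xstar l| :=
    ((eventually_all_finset S).2 fun l hl => eventually_lt_nhds (abs_pos.2 (hS l hl))).exists_gt
  refine ⟨ε, hε, (eventually_all_finset S).2 fun l hl => ?_⟩
  have hxl : Tendsto (fun n => |x n l|) f (𝓝 |xstar l|) :=
    (((PiLp.continuous_apply 2 _ l).tendsto xstar).comp hx).abs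
  exact (hxl.eventually_const_lt (hεS l hl)).mono fun _ => le_of_lt

section GeneralizedThresholding

variable {ι : Type*} [Fintype ι] [DecidableEq ι] {K : ℕ} {J : (ι → ℝ) → Finset ι} {shr : ℝ → ℝ}
  {T : EuclideanSpace ℝ ι → EuclideanSpace ℝ ι}

theorem eq_self_of_card_support_le
    (hJcard : ∀ y, (J y).card = K)
    (hJtop : ∀ y : ι → ℝ, ∀ l ∈ J y, ∀ l' ∉ J y, |y l'| ≤ |y l|)
    (hshr0 : shr 0 = 0)
    (hT : ∀ y l, T y l = if l ∈ J y then y l else shr (y l))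
    {y : EuclideanSpace ℝ ι} (hy : (univ.filter fun l => y l ≠ 0).card ≤ K) :
    T y = y := by
  ext l
  rw [hT]
  split_ifs with hl
  · rfl
  suffices y l = 0 by rw [this, hshr0]
  by_contra hne
  have hsub : insert l (J y) ⊆ univ.filter fun l => y l ≠ 0 := by
    intro j hj
    rcases mem_insert.1 hj with rfl | hj
    · simpa using hne
    · have : 0 < |y j| := (abs_pos.2 hne).trans_le (hJtop y j hj l hl)
      simpa using abs_pos.1 this
  have hcard := card_le_card hsub
  rw [card_insert_of_notMem hl, hJcard] at hcard
  omega

theorem le_norm_sub_of_card_lt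
    (hJcard : ∀ y, (J y).card = K)
    (hJtop : ∀ y : ι → ℝ, ∀ l ∈ J y, ∀ l' ∉ J y, |y l'| ≤ |y l|)
    {ε δ : ℝ}
    (hδ : ∀ (y : ι → ℝ) (τ : ℝ), (∀ l ∈ J y, |τ| ≤ |y l|) → ε ≤ |τ| → |shr τ| ≤ |τ| - δ)
    (hT : ∀ y l, T y l = if l ∈ J y then y l else shr (y l))
    {y : EuclideanSpace ℝ ι} {S : Finset ι} (hS : K < S.card) (hy : ∀ l ∈ S, ε ≤ |y l|) :
    δ ≤ ‖y - T y‖ := by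
  obtain ⟨l, hlS, hlJ⟩ := exists_mem_notMem_of_card_lt_card (s := J y) (hJcard y ▸ hS)
  have hshr : |shr (y l)| ≤ |y l| - δ := hδ y (y l) (fun j hj => hJtop y j hj l hlJ) (hy l hlS)
  calc δ ≤ |y l| - |shr (y l)| := by linarith
    _ ≤ |y l - shr (y l)| := abs_sub_abs_le_abs_sub _ _
    _ = ‖(y - T y) l‖ := by rw [Real.norm_eq_abs, PiLp.sub_apply, hT, if_neg hlJ]
    _ ≤ ‖y - T y‖ := PiLp.norm_apply_le _ l

end GeneralizedThresholding

theorem gt_demiclosed_at_zero_general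
    (L K : ℕ)
    (Jsel : (Fin L → ℝ) → Finset (Fin L))
    (hJcard : ∀ x, (Jsel x).card = K)
    (hJsel : ∀ x : Fin L → ℝ, ∀ l ∈ Jsel x, ∀ l' ∉ Jsel x,
      |x l'| < |x l| ∨ (|x l'| = |x l| ∧ (l : ℕ) < (l' : ℕ)))
    (shr : ℝ → ℝ)
    (hshr2 : ∀ (x : Fin L → ℝ) (τ : ℝ), (∀ l ∈ Jsel x, |τ| ≤ |x l|) → |shr τ| ≤ |τ|)
    (hshr3 : ∀ ε : ℝ, 0 < ε → ∃ δ : ℝ, 0 < δ ∧ ∀ (x : Fin L → ℝ) (τ : ℝ),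
      (∀ l ∈ Jsel x, |τ| ≤ |x l|) → ε ≤ |τ| → |shr τ| ≤ |τ| - δ)
    -- `T` is the generalized thresholding operator `T_GT^(K)`
    (T : EuclideanSpace ℝ (Fin L) → EuclideanSpace ℝ (Fin L))
    (hT : ∀ (x : EuclideanSpace ℝ (Fin L)) (l : Fin L),
      T x l = if l ∈ Jsel x then x l else shr (x l))
    (x : ℕ → EuclideanSpace ℝ (Fin L)) (xstar : EuclideanSpace ℝ (Fin L))
    (hconv : Tendsto x atTop (𝓝 xstar))
    (hres : Tendsto (fun n => x n - T (x n)) atTop (𝓝 0)) :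
    T xstar = xstar ∧ (Finset.univ.filter fun l => xstar l ≠ 0).card ≤ K := by
  have hJtop : ∀ y : Fin L → ℝ, ∀ l ∈ Jsel y, ∀ l' ∉ Jsel y, |y l'| ≤ |y l| :=
    fun y l hl l' hl' => (hJsel y l hl l' hl').elim le_of_lt fun h => h.1.le
  have hshr0 : shr 0 = 0 := abs_nonpos_iff.1 (by simpa using hshr2 0 0 (by simp))
  have hsparse : (univ.filter fun l => xstar l ≠ 0).card ≤ K := by
    by_contra! hS
    obtain ⟨ε, hε, hlarge⟩ :=
      exists_pos_eventually_le_abs_apply hconv (S := univ.filter fun l => xstar l ≠ 0)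
        fun l hl => (mem_filter.1 hl).2
    obtain ⟨δ, hδ, hshrδ⟩ := hshr3 ε hε
    have hsmall : ∀ᶠ n in atTop, ‖x n - T (x n)‖ < δ :=
      (tendsto_zero_iff_norm_tendsto_zero.1 hres).eventually_lt_const hδ
    obtain ⟨n, hlarge_n, hsmall_n⟩ := (hlarge.and hsmall).exists
    exact (le_norm_sub_of_card_lt hJcard hJtop hshrδ hT hS hlarge_n).not_gt hsmall_n
  exact ⟨eq_self_of_card_support_le hJcard hJtop hshr0 hT hsparse, hsparse⟩

/-- `I − T_GT^(K)` is demiclosed at `0`: if `x_n → x_*` and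
`x_n − T_GT^(K)(x_n) → 0`, then `x_*` is a fixed point of `T_GT^(K)`, i.e. `x_*` has
at most `K` nonzero components. -/
theorem gt_demiclosed_at_zero
    (L K : ℕ) (hL : 2 ≤ L) (hK1 : 1 ≤ K) (hKL : K ≤ L - 1)
    (Jsel : (Fin L → ℝ) → Finset (Fin L))
    (hJcard : ∀ x, (Jsel x).card = K)
    (hJsel : ∀ x : Fin L → ℝ, ∀ l ∈ Jsel x, ∀ l' ∉ Jsel x,
      |x l'| < |x l| ∨ (|x l'| = |x l| ∧ (l : ℕ) < (l' : ℕ)))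
    (shr : ℝ → ℝ)
    (hshr1 : ∀ (x : Fin L → ℝ) (τ : ℝ), (∀ l ∈ Jsel x, |τ| ≤ |x l|) → τ * shr τ ≥ 0)
    (hshr2 : ∀ (x : Fin L → ℝ) (τ : ℝ), (∀ l ∈ Jsel x, |τ| ≤ |x l|) → |shr τ| ≤ |τ|)
    (hshr3 : ∀ ε : ℝ, 0 < ε → ∃ δ : ℝ, 0 < δ ∧ ∀ (x : Fin L → ℝ) (τ : ℝ),
      (∀ l ∈ Jsel x, |τ| ≤ |x l|) → ε ≤ |τ| → |shr τ| ≤ |τ| - δ)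
    -- `T` is the generalized thresholding operator `T_GT^(K)`
    (T : EuclideanSpace ℝ (Fin L) → EuclideanSpace ℝ (Fin L))
    (hT : ∀ (x : EuclideanSpace ℝ (Fin L)) (l : Fin L),
      T x l = if l ∈ Jsel x then x l else shr (x l))
    (x : ℕ → EuclideanSpace ℝ (Fin L)) (xstar : EuclideanSpace ℝ (Fin L))
    (hconv : Tendsto x atTop (𝓝 xstar))
    (hres : Tendsto (fun n => x n - T (x n)) atTop (𝓝 0)) :
    T xstar = xstar ∧ (Finset.univ.filter fun l => xstar l ≠ 0).card ≤ K :=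
  gt_demiclosed_at_zero_general L K Jsel hJcard hJsel shr hshr2 hshr3 T hT x xstar hconv hres
end

section
/- Under the assumptions on shr, if (x_n) is a sequence in R^L with x_n − T_GT^(K)(x_n) → 0, then max{|x_{n,l}| : l ∉ J_{x_n}^(K)} → 0 as n → ∞, i.e., the components of x_n outside the K largest-in-magnitude indices tend uniformly to zero. -/
open Filter Topology

lemma abs_coord_le_norm {L : ℕ} (v : EuclideanSpace ℝ (Fin L)) (l : Fin L) :
    |v l| ≤ ‖v‖ := by
  rw [EuclideanSpace.norm_eq]
  have h1 : |v l| = Real.sqrt (‖v l‖ ^ 2) := by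
    rw [Real.sqrt_sq_eq_abs]; simp
  rw [h1]
  apply Real.sqrt_le_sqrt
  exact Finset.single_le_sum (f := fun i => ‖v i‖ ^ 2)
    (fun i _ => sq_nonneg _) (Finset.mem_univ l)

/-- If `x_n − T_GT^(K)(x_n) → 0`, then the components of `x_n` outside
the `K` largest-in-magnitude indices tend uniformly to zero. -/
theorem gt_residual_small_components
    (L K : ℕ) (hL : 2 ≤ L) (hK1 : 1 ≤ K) (hKL : K ≤ L - 1)
    (Jsel : (Fin L → ℝ) → Finset (Fin L))
    (hJcard : ∀ x, (Jsel x).card = K)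
    (hJsel : ∀ x : Fin L → ℝ, ∀ l ∈ Jsel x, ∀ l' ∉ Jsel x,
      |x l'| < |x l| ∨ (|x l'| = |x l| ∧ (l : ℕ) < (l' : ℕ)))
    (shr : ℝ → ℝ)
    (hshr1 : ∀ (x : Fin L → ℝ) (τ : ℝ), (∀ l ∈ Jsel x, |τ| ≤ |x l|) → τ * shr τ ≥ 0)
    (hshr2 : ∀ (x : Fin L → ℝ) (τ : ℝ), (∀ l ∈ Jsel x, |τ| ≤ |x l|) → |shr τ| ≤ |τ|)
    (hshr3 : ∀ ε : ℝ, 0 < ε → ∃ δ : ℝ, 0 < δ ∧ ∀ (x : Fin L → ℝ) (τ : ℝ),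
      (∀ l ∈ Jsel x, |τ| ≤ |x l|) → ε ≤ |τ| → |shr τ| ≤ |τ| - δ)
    -- `T` is the generalized thresholding operator `T_GT^(K)`
    (T : EuclideanSpace ℝ (Fin L) → EuclideanSpace ℝ (Fin L))
    (hT : ∀ (x : EuclideanSpace ℝ (Fin L)) (l : Fin L),
      T x l = if l ∈ Jsel x then x l else shr (x l))
    (x : ℕ → EuclideanSpace ℝ (Fin L))
    (hres : Tendsto (fun n => x n - T (x n)) atTop (𝓝 0)) :
    ∀ ε : ℝ, 0 < ε → ∃ N : ℕ, ∀ n ≥ N, ∀ l ∉ Jsel (x n), |x n l| < ε := by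
  intro ε hε
  obtain ⟨δ, hδ, hδ3⟩ := hshr3 ε hε
  have hnorm : Tendsto (fun n => ‖x n - T (x n)‖) atTop (𝓝 0) :=
    (tendsto_zero_iff_norm_tendsto_zero).1 hres
  rw [Metric.tendsto_atTop] at hnorm
  obtain ⟨N, hN⟩ := hnorm δ hδ
  refine ⟨N, fun n hn l hl => ?_⟩
  by_contra hcon
  push_neg at hcon
  have hτε : ε ≤ |x n l| := hcon
  have hdom : ∀ l' ∈ Jsel (x n), |x n l| ≤ |x n l'| := by
    intro l' hl'
    rcases hJsel (x n) l' hl' l hl with h | ⟨h, _⟩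
    · exact h.le
    · exact h.le
  have hshr : |shr (x n l)| ≤ |x n l| - δ := hδ3 (x n) (x n l) hdom hτε
  have hres_comp : |(x n - T (x n)) l| ≤ ‖x n - T (x n)‖ :=
    abs_coord_le_norm _ l
  have hNn := hN n hn
  rw [Real.dist_eq, sub_zero, abs_of_nonneg (norm_nonneg _)] at hNn
  have hNn' : ‖x n - T (x n)‖ < δ := hNn
  have hcomp : (x n - T (x n)) l = x n l - shr (x n l) := by
    have : (x n - T (x n)) l = x n l - T (x n) l := rfl
    rw [this, hT (x n) l, if_neg hl]
  have hlow : δ ≤ |x n l - shr (x n l)| := by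
    have h1 : |x n l| - |shr (x n l)| ≤ |x n l - shr (x n l)| :=
      abs_sub_abs_le_abs_sub _ _
    linarith
  rw [hcomp] at hres_comp
  linarith
end

section
/- Let Θ : R^L → R be convex with nonempty zero-level set lev₀(Θ) := {a : Θ(a) ≤ 0}, let Θ'(a) denote a subgradient of Θ at a, and for λ ∈ (0,2) define the relaxed subgradient projection T(a) := a − λ·(Θ(a)/||Θ'(a)||²)·Θ'(a) if Θ(a) > 0 (with Θ'(a) ≠ 0), and T(a) := a otherwise. Then for every a ∈ R^L and every v ∈ lev₀(Θ), ((2−λ)/λ)·||a − T(a)||² ≤ ||a − v||² − ||T(a) − v||². -/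
/-!
By the subgradient inequality at `a`, every `v` with `Θ v ≤ 0` lies in the halfspace
`{y | ⟪a - y, g a⟫ ≥ Θ a}`, and `T a` is the `λ`-relaxed projection of `a` onto it. Relative to
`x := a - v`, the squared distance drops by `2c⟪x, g a⟫ - c²‖g a‖²` with `c = λ Θ a / ‖g a‖²`,
and `⟪x, g a⟫ ≥ Θ a` bounds this below by `(2 - λ)/λ · ‖c • g a‖²`.
-/

open scoped RealInnerProductSpace

section RelaxedStep

variable {E : Type*} [NormedAddCommGroup E] [InnerProductSpace ℝ E]

lemma norm_sq_sub_norm_sub_smul_sq (x u : E) (c : ℝ) :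
    ‖x‖ ^ 2 - ‖x - c • u‖ ^ 2 = 2 * c * ⟪x, u⟫ - c ^ 2 * ‖u‖ ^ 2 := by
  rw [norm_sub_sq_real, real_inner_smul_right, norm_smul, mul_pow, Real.norm_eq_abs, sq_abs]
  ring

lemma norm_sq_sub_norm_sub_relaxedStep_sq {x u : E} {θ lam : ℝ} (hlam : 0 < lam) (hθ : 0 ≤ θ)
    (hθx : θ ≤ ⟪x, u⟫) :
    (2 - lam) / lam * ‖(lam * θ / ‖u‖ ^ 2) • u‖ ^ 2
      ≤ ‖x‖ ^ 2 - ‖x - (lam * θ / ‖u‖ ^ 2) • u‖ ^ 2 := by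
  rcases eq_or_ne u 0 with rfl | hu
  · simp
  set c := lam * θ / ‖u‖ ^ 2
  have hc : 0 ≤ c := by positivity
  have hcu : c ^ 2 * ‖u‖ ^ 2 = c * (lam * θ) := by
    rw [sq c, mul_assoc, div_mul_cancel₀ _ (by positivity)]
  rw [norm_sq_sub_norm_sub_smul_sq, norm_smul, mul_pow, Real.norm_eq_abs, sq_abs, hcu]
  calc (2 - lam) / lam * (c * (lam * θ)) = 2 * c * θ - c * (lam * θ) := by
        field_simp
    _ ≤ 2 * c * ⟪x, u⟫ - c * (lam * θ) := by gcongr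

end RelaxedStep

theorem subgradient_projection_attracting_general
    (L : ℕ) (Θ : EuclideanSpace ℝ (Fin L) → ℝ)
    (g : EuclideanSpace ℝ (Fin L) → EuclideanSpace ℝ (Fin L))
    (hsub : ∀ a w, ⟪w - a, g a⟫ + Θ a ≤ Θ w)
    (lam : ℝ) (hlam : 0 < lam ∧ lam < 2)
    (T : EuclideanSpace ℝ (Fin L) → EuclideanSpace ℝ (Fin L))
    (hTpos : ∀ a, 0 < Θ a → T a = a - ((lam * Θ a / ‖g a‖ ^ 2) • g a))
    (hTnonpos : ∀ a, Θ a ≤ 0 → T a = a) :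
    ∀ a, ∀ v, Θ v ≤ 0 →
      ((2 - lam) / lam) * ‖a - T a‖ ^ 2 ≤ ‖a - v‖ ^ 2 - ‖T a - v‖ ^ 2 := by
  intro a v hv
  rcases le_or_gt (Θ a) 0 with hΘa | hΘa
  · simp [hTnonpos a hΘa]
  have hcut : Θ a ≤ ⟪a - v, g a⟫ := by
    have := hsub a v
    rw [← neg_sub a v, inner_neg_left] at this
    linarith
  rw [hTpos a hΘa, sub_sub_cancel, sub_right_comm]
  exact norm_sq_sub_norm_sub_relaxedStep_sq hlam.1 hΘa.le hcut

/-- The relaxed subgradient projection mapping associated with a convex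
function `Θ` with nonempty zero-level set is `((2−λ)/λ)`-attracting with respect to
`lev₀(Θ)`. -/
theorem subgradient_projection_attracting
    (L : ℕ) (Θ : EuclideanSpace ℝ (Fin L) → ℝ)
    (hconv : ConvexOn ℝ Set.univ Θ)
    (g : EuclideanSpace ℝ (Fin L) → EuclideanSpace ℝ (Fin L))
    (hsub : ∀ a w, ⟪w - a, g a⟫ + Θ a ≤ Θ w)
    (hlev : ∃ v, Θ v ≤ 0)
    (hg0 : ∀ a, 0 < Θ a → g a ≠ 0)
    (lam : ℝ) (hlam : 0 < lam ∧ lam < 2)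
    (T : EuclideanSpace ℝ (Fin L) → EuclideanSpace ℝ (Fin L))
    (hTpos : ∀ a, 0 < Θ a → T a = a - ((lam * Θ a / ‖g a‖ ^ 2) • g a))
    (hTnonpos : ∀ a, Θ a ≤ 0 → T a = a) :
    ∀ a, ∀ v, Θ v ≤ 0 →
      ((2 - lam) / lam) * ‖a - T a‖ ^ 2 ≤ ‖a - v‖ ^ 2 - ‖T a - v‖ ^ 2 :=
  subgradient_projection_attracting_general L Θ g hsub lam hlam T hTpos hTnonpos
end

section
/- Let C₁,...,Cm be nonempty closed convex subsets of R^L with ∩_i C_i ≠ ∅, let a ∈ R^L, weights ω_i > 0 summing to 1, and μ ∈ [ε'M, (2−ε')M] with ε' ∈ (0,1], where M is the extrapolation coefficient M := (Σ_i ω_i ||P_{C_i}(a) − a||²)/||Σ_i ω_i P_{C_i}(a) − a||² (set M := 1 if the denominator vanishes). Define a⁺ := a + μ(Σ_i ω_i P_{C_i}(a) − a). Then for every v ∈ ∩_i C_i, ||a⁺ − v|| ≤ ||a − v||. -/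
open scoped RealInnerProductSpace


/-- Fejér monotonicity of the extrapolated parallel projection step:
for `μ ∈ [ε'M, (2−ε')M]` and any `v ∈ ∩ᵢ Cᵢ`,
`‖a + μ(Σ ωᵢ P_{Cᵢ}(a) − a) − v‖ ≤ ‖a − v‖`. -/
theorem extrapolated_step_fejer_monotone
    (L m : ℕ) (C : Fin m → Set (EuclideanSpace ℝ (Fin L)))
    (hCne : ∀ i, (C i).Nonempty) (hCclosed : ∀ i, IsClosed (C i))
    (hCconv : ∀ i, Convex ℝ (C i))
    (a : EuclideanSpace ℝ (Fin L))
    (ω : Fin m → ℝ) (hω : ∀ i, 0 < ω i) (hωsum : ∑ i, ω i = 1)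
    (P : Fin m → EuclideanSpace ℝ (Fin L))
    (hP : ∀ i, P i ∈ C i ∧ ∀ v ∈ C i, ‖a - P i‖ ≤ ‖a - v‖)
    (M : ℝ)
    (hM1 : (∑ i, ω i • P i) ≠ a →
      M = (∑ i, ω i * ‖P i - a‖ ^ 2) / ‖(∑ i, ω i • P i) - a‖ ^ 2)
    (hM2 : (∑ i, ω i • P i) = a → M = 1)
    (ε' : ℝ) (hε' : 0 < ε' ∧ ε' ≤ 1)
    (μ : ℝ) (hμ : ε' * M ≤ μ ∧ μ ≤ (2 - ε') * M)
    (v : EuclideanSpace ℝ (Fin L)) (hv : ∀ i, v ∈ C i) :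
    ‖a + μ • ((∑ i, ω i • P i) - a) - v‖ ≤ ‖a - v‖ := by
  obtain ⟨hε'0, hε'1⟩ := hε'
  by_cases hbz : (∑ i, ω i • P i) = a
  · simp [hbz]
  -- notation
  set b : EuclideanSpace ℝ (Fin L) := (∑ i, ω i • P i) - a with hbdef
  set S : ℝ := ∑ i, ω i * ‖P i - a‖ ^ 2 with hSdef
  have hMdef : M = S / ‖b‖ ^ 2 := hM1 hbz
  have hbn : b ≠ 0 := sub_ne_zero.mpr hbz
  have hbn2 : (0:ℝ) < ‖b‖ ^ 2 := pow_pos (norm_pos_iff.mpr hbn) 2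
  have hS0 : 0 ≤ S := Finset.sum_nonneg fun i _ => mul_nonneg (hω i).le (sq_nonneg _)
  have hM0 : 0 ≤ M := by rw [hMdef]; exact div_nonneg hS0 hbn2.le
  have hμ0 : 0 ≤ μ := le_trans (mul_nonneg hε'0.le hM0) hμ.1
  have hSM : S = M * ‖b‖ ^ 2 := by
    rw [hMdef]; field_simp
  -- projection inequality: ⟪a - P i, v - P i⟫ ≤ 0
  have key : ∀ i, ‖P i - a‖ ^ 2 ≤ ⟪P i - a, v - a⟫ := by
    intro i
    haveI : Nonempty ↑(C i) := ⟨⟨P i, (hP i).1⟩⟩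
    have hinf : ‖a - P i‖ = ⨅ w : C i, ‖a - w‖ := by
      refine le_antisymm (le_ciInf fun w => (hP i).2 w w.2) ?_
      refine ciInf_le ⟨0, ?_⟩ (⟨P i, (hP i).1⟩ : C i)
      rintro x ⟨w, rfl⟩
      exact norm_nonneg _
    have h0 : ⟪a - P i, v - P i⟫ ≤ 0 :=
      ((norm_eq_iInf_iff_real_inner_le_zero (hCconv i) (hP i).1).mp hinf) v (hv i)
    have hexp : ⟪P i - a, v - a⟫ = -⟪a - P i, v - P i⟫ + ‖P i - a‖ ^ 2 := by
      have : (v : EuclideanSpace ℝ (Fin L)) - a = (v - P i) + (P i - a) := by abel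
      rw [this, inner_add_right, real_inner_self_eq_norm_sq]
      have : ⟪P i - a, v - P i⟫ = -⟪a - P i, v - P i⟫ := by
        rw [← inner_neg_left]; congr 1; abel
      rw [this]
    linarith
  -- b as a weighted sum of P i - a
  have hbsum : b = ∑ i, ω i • (P i - a) := by
    simp only [hbdef, smul_sub, Finset.sum_sub_distrib, ← Finset.sum_smul, hωsum, one_smul]
  have hinner : S ≤ ⟪b, v - a⟫ := by
    rw [hbsum, sum_inner]
    refine Finset.sum_le_sum fun i _ => ?_
    rw [real_inner_smul_left]
    exact mul_le_mul_of_nonneg_left (key i) (hω i).le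
  -- norm squared expansion
  have hsq : ‖a + μ • b - v‖ ^ 2 ≤ ‖a - v‖ ^ 2 := by
    have h1 : a + μ • b - v = (a - v) + μ • b := by abel
    rw [h1, norm_add_sq_real]
    have h2 : ⟪a - v, μ • b⟫ = μ * (- ⟪b, v - a⟫) := by
      rw [real_inner_smul_right, real_inner_comm]
      congr 1
      rw [← inner_neg_right]; congr 1; abel
    rw [h2, norm_smul, Real.norm_eq_abs, abs_of_nonneg hμ0]
    have h3 : (‖μ • b‖ : ℝ) ^ 2 = μ ^ 2 * ‖b‖ ^ 2 := by
      rw [norm_smul]; simp [mul_pow, abs_of_nonneg hμ0]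
    have hμ2M : μ ≤ 2 * M - ε' * M := by linarith [hμ.2]
    have h4 : μ * ‖b‖^2 ≤ 2 * S - ε' * M * ‖b‖ ^ 2 := by
      rw [hSM]; nlinarith
    have h5 : 0 ≤ ε' * M * ‖b‖ ^ 2 := by positivity
    nlinarith [mul_le_mul_of_nonneg_left hinner hμ0,
      mul_le_mul_of_nonneg_left h4 hμ0, mul_nonneg hμ0 h5,
      sq_abs μ, sq_nonneg (‖b‖ * μ)]
  nlinarith [norm_nonneg (a + μ • b - v), norm_nonneg (a - v), hsq]
end

section
/- If T₁ : R^L → R^L is 1-attracting partially quasi-nonexpansive with respect to sets Y¹_x ⊆ Fix(T₁), and T₂ : R^L → R^L satisfies ((2−λ)/λ)||x − T₂(x)||² ≤ ||x − v||² − ||T₂(x) − v||² for all v in a nonempty closed convex set C ⊆ R^L with λ ∈ (0,2), then for any x and any v ∈ C ∩ Y¹_{T₂(x)}: ||T₁T₂(x) − v||² ≤ ||x − v||² − ((2−λ)/λ)||x − T₂(x)||² − ||T₂(x) − T₁T₂(x)||². In particular ||T₁T₂(x) − v|| ≤ ||x − v||. -/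
/-- Composition inequality: if `T₁` is 1-attracting partially
quasi-nonexpansive w.r.t. `Y¹` and `T₂` is `((2−λ)/λ)`-attracting w.r.t. a nonempty
closed convex `C`, then for `v ∈ C ∩ Y¹_{T₂(x)}`,
`‖T₁T₂(x) − v‖² ≤ ‖x − v‖² − ((2−λ)/λ)‖x − T₂(x)‖² − ‖T₂(x) − T₁T₂(x)‖²`, and in
particular `‖T₁T₂(x) − v‖ ≤ ‖x − v‖`. -/
theorem composition_inequality
    (L : ℕ)
    (T₁ T₂ : EuclideanSpace ℝ (Fin L) → EuclideanSpace ℝ (Fin L))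
    (Y₁ : EuclideanSpace ℝ (Fin L) → Set (EuclideanSpace ℝ (Fin L)))
    (hY₁fix : ∀ x, Y₁ x ⊆ {a | T₁ a = a})
    (h1 : ∀ x, ∀ y ∈ Y₁ x, ‖x - T₁ x‖ ^ 2 ≤ ‖x - y‖ ^ 2 - ‖T₁ x - y‖ ^ 2)
    (C : Set (EuclideanSpace ℝ (Fin L)))
    (hCne : C.Nonempty) (hCclosed : IsClosed C) (hCconv : Convex ℝ C)
    (lam : ℝ) (hlam : 0 < lam ∧ lam < 2)
    (h2 : ∀ x, ∀ v ∈ C,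
      ((2 - lam) / lam) * ‖x - T₂ x‖ ^ 2 ≤ ‖x - v‖ ^ 2 - ‖T₂ x - v‖ ^ 2) :
    ∀ x, ∀ v, v ∈ C → v ∈ Y₁ (T₂ x) →
      (‖T₁ (T₂ x) - v‖ ^ 2 ≤ ‖x - v‖ ^ 2 - ((2 - lam) / lam) * ‖x - T₂ x‖ ^ 2
          - ‖T₂ x - T₁ (T₂ x)‖ ^ 2) ∧
      ‖T₁ (T₂ x) - v‖ ≤ ‖x - v‖ := by
  intro x v hvC hvY
  have ha := h1 (T₂ x) v hvY
  have hb := h2 x v hvC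
  have hf : 0 ≤ (2 - lam) / lam :=
    div_nonneg (by linarith [hlam.2]) (le_of_lt hlam.1)
  have hmain : ‖T₁ (T₂ x) - v‖ ^ 2 ≤ ‖x - v‖ ^ 2 - ((2 - lam) / lam) * ‖x - T₂ x‖ ^ 2
      - ‖T₂ x - T₁ (T₂ x)‖ ^ 2 := by nlinarith
  refine ⟨hmain, ?_⟩
  have h0 : 0 ≤ (2 - lam) / lam * ‖x - T₂ x‖ ^ 2 := by positivity
  nlinarith [norm_nonneg (T₁ (T₂ x) - v), norm_nonneg (x - v),
    sq_nonneg (‖T₂ x - T₁ (T₂ x)‖)]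
end
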